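/- arXiv:2411.13877 — 8 statements merged into one kernel-verified Lean document; each statement's English description precedes it below -/
import Mathlib

section
/- Let H be a real inner product space, let x₀, x₁, y ∈ H, and for t ∈ [0,1] write x_t = (1−t)·x₀ + t·x₁. Then for any a, s ∈ [0,1] with a ≤ s, one has a·‖y − x_s‖² ≥ s·‖y − x_a‖² − (s−a)·‖y − x₀‖² + s·a·(s−a)·‖x₀ − x₁‖². -/
theorem thick_ineq {H : Type*} [NormedAddCommGroup H] [InnerProductSpace ℝ H]
    (x₀ x₁ y : H) (a s : ℝ) (ha0 : 0 ≤ a) (has : a ≤ s) (hs1 : s ≤ 1) :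
    a * ‖y - ((1 - s) • x₀ + s • x₁)‖ ^ 2 ≥
      s * ‖y - ((1 - a) • x₀ + a • x₁)‖ ^ 2 - (s - a) * ‖y - x₀‖ ^ 2 +
        s * a * (s - a) * ‖x₀ - x₁‖ ^ 2 := by
  have key : ∀ t : ℝ, ‖y - ((1 - t) • x₀ + t • x₁)‖ ^ 2 =
      ‖y - x₀‖ ^ 2 - 2 * t * inner ℝ (y - x₀) (x₁ - x₀) + t ^ 2 * ‖x₁ - x₀‖ ^ 2 := by
    intro t
    have h : y - ((1 - t) • x₀ + t • x₁) = (y - x₀) - t • (x₁ - x₀) := by module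
    rw [h, @norm_sub_sq_real, real_inner_smul_right, norm_smul]
    simp [mul_pow, sq_abs]
    ring
  have hv : ‖x₀ - x₁‖ = ‖x₁ - x₀‖ := norm_sub_rev _ _
  rw [key a, key s, hv]
  apply ge_of_eq
  ring
end

section
/- Let H be a real inner product space. For any s, t ∈ [0,1] and any x, y, z, w ∈ H, 0 ≤ (1−s)(1−t)‖x−y‖² + s(1−t)‖y−z‖² + s·t·‖z−w‖² + (1−s)t·‖w−x‖² − s(1−s)‖x−z‖² − t(1−t)‖y−w‖². -/
theorem boxtimes_sum_eq_norm_sq {H : Type*} [NormedAddCommGroup H] [InnerProductSpace ℝ H]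
    (s t : ℝ) (x y z w : H) :
    (1 - s) * (1 - t) * ‖x - y‖ ^ 2 + s * (1 - t) * ‖y - z‖ ^ 2 +
        s * t * ‖z - w‖ ^ 2 + (1 - s) * t * ‖w - x‖ ^ 2 -
        s * (1 - s) * ‖x - z‖ ^ 2 - t * (1 - t) * ‖y - w‖ ^ 2 =
      ‖(1 - s) • x - (1 - t) • y + s • z - t • w‖ ^ 2 := by
  simp only [← real_inner_self_eq_norm_sq, inner_sub_left, inner_sub_right,
    inner_add_left, inner_add_right, real_inner_smul_left, real_inner_smul_right]
  rw [real_inner_comm y x, real_inner_comm z y, real_inner_comm w z,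
    real_inner_comm x w, real_inner_comm z x, real_inner_comm w y]
  ring

theorem boxtimes_ineq_general {H : Type*} [NormedAddCommGroup H] [InnerProductSpace ℝ H]
    (s t : ℝ)
    (x y z w : H) :
    0 ≤ (1 - s) * (1 - t) * ‖x - y‖ ^ 2 + s * (1 - t) * ‖y - z‖ ^ 2 +
        s * t * ‖z - w‖ ^ 2 + (1 - s) * t * ‖w - x‖ ^ 2 -
        s * (1 - s) * ‖x - z‖ ^ 2 - t * (1 - t) * ‖y - w‖ ^ 2 := by
  rw [boxtimes_sum_eq_norm_sq]
  positivity

theorem boxtimes_ineq {H : Type*} [NormedAddCommGroup H] [InnerProductSpace ℝ H]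
    (s t : ℝ) (hs0 : 0 ≤ s) (hs1 : s ≤ 1) (ht0 : 0 ≤ t) (ht1 : t ≤ 1)
    (x y z w : H) :
    0 ≤ (1 - s) * (1 - t) * ‖x - y‖ ^ 2 + s * (1 - t) * ‖y - z‖ ^ 2 +
        s * t * ‖z - w‖ ^ 2 + (1 - s) * t * ‖w - x‖ ^ 2 -
        s * (1 - s) * ‖x - z‖ ^ 2 - t * (1 - t) * ‖y - w‖ ^ 2 :=
  boxtimes_ineq_general s t x y z w
end

section
/- Let H be a real inner product space. For any a, b, c, s, t ∈ [0,1] with a ≤ s, and any points x₀, x₁, y₀, y₁, z₀, z₁ ∈ H, the following inequality holds: s·t·a·((1−t)(1−a) + (1−s)·t·b)·‖x₀−x₁‖² + s(1−t)t(1−b)b·‖y₀−y₁‖² + a·b(1−c)c·‖z₀−z₁‖² ≤ (1−s)t·a·b(1−c)·‖x₀−z₀‖² + s·t·a·b(1−c)·‖x₁−z₀‖² + (1−t)a·b(1−c)·‖y₁−z₀‖² + (1−s)t·a·b·c·‖x₀−z₁‖² + s·t·a·b·c·‖x₁−z₁‖² + (1−t)a·b·c·‖y₁−z₁‖² + s(1−t)t(1−a)(1−b)·‖x₀−y₀‖²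 + s(1−t)t·a(1−b)·‖x₁−y₀‖² + (1−t)t(s−a)b·‖x₀−y₁‖². -/
/-!
In a Hilbert space the CAT(0) comparison inequality for a point `(1 - t) p + t q` of a segment
is an identity, `‖(1 - t) p + t q - z‖² = (1 - t) ‖p - z‖² + t ‖q - z‖² - t (1 - t) ‖p - q‖²`.
Expanding with it, the right-hand side minus the left-hand side of the six-point inequality is
exactly `a b ‖w - z_c‖² + s t (1 - t) ‖x_a - y_b‖²`, where `x_a`, `y_b`, `z_c`, `x_s` are the
points at parameters `a`, `b`, `c`, `s` of the segments `[x₀, x₁]`, `[y₀, y₁]`, `[z₀, z₁]`,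
`[x₀, x₁]`, and `w = (1 - t) y₁ + t x_s`; both terms are nonnegative.
-/

open AffineMap

section

variable {H : Type*} [NormedAddCommGroup H] [InnerProductSpace ℝ H]

theorem norm_lineMap_sub_sq (p q z : H) (t : ℝ) :
    ‖lineMap p q t - z‖ ^ 2 =
      (1 - t) * ‖p - z‖ ^ 2 + t * ‖q - z‖ ^ 2 - t * (1 - t) * ‖p - q‖ ^ 2 := by
  have hsplit : lineMap p q t - z = (1 - t) • (p - z) + t • (q - z) := by
    rw [lineMap_apply_module]; module
  rw [hsplit, show p - q = (p - z) - (q - z) by abel]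
  generalize p - z = u, q - z = v
  simp only [← real_inner_self_eq_norm_sq, inner_add_left, inner_add_right, inner_sub_left,
    inner_sub_right, real_inner_smul_left, real_inner_smul_right, real_inner_comm u v]
  ring

theorem norm_lineMap_sub_lineMap_sq (p₀ p₁ q₀ q₁ : H) (a b : ℝ) :
    ‖lineMap p₀ p₁ a - lineMap q₀ q₁ b‖ ^ 2 =
      (1 - a) * (1 - b) * ‖p₀ - q₀‖ ^ 2 + (1 - a) * b * ‖p₀ - q₁‖ ^ 2 +
        a * (1 - b) * ‖p₁ - q₀‖ ^ 2 + a * b * ‖p₁ - q₁‖ ^ 2 -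
        a * (1 - a) * ‖p₀ - p₁‖ ^ 2 - b * (1 - b) * ‖q₀ - q₁‖ ^ 2 := by
  have hq (p : H) : ‖p - lineMap q₀ q₁ b‖ ^ 2 =
      (1 - b) * ‖p - q₀‖ ^ 2 + b * ‖p - q₁‖ ^ 2 - b * (1 - b) * ‖q₀ - q₁‖ ^ 2 := by
    rw [norm_sub_rev, norm_lineMap_sub_sq, norm_sub_rev q₀, norm_sub_rev q₁]
  rw [norm_lineMap_sub_sq, hq, hq]
  ring

end

theorem six_point_ineq_general {H : Type*} [NormedAddCommGroup H] [InnerProductSpace ℝ H]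
    (a b c s t : ℝ)
    (ha0 : 0 ≤ a) (hb0 : 0 ≤ b)
    (has : a ≤ s) (ht0 : 0 ≤ t) (ht1 : t ≤ 1)
    (x₀ x₁ y₀ y₁ z₀ z₁ : H) :
    s * t * a * ((1 - t) * (1 - a) + (1 - s) * t * b) * ‖x₀ - x₁‖ ^ 2 +
        s * (1 - t) * t * (1 - b) * b * ‖y₀ - y₁‖ ^ 2 +
        a * b * (1 - c) * c * ‖z₀ - z₁‖ ^ 2 ≤
      (1 - s) * t * a * b * (1 - c) * ‖x₀ - z₀‖ ^ 2 +
        s * t * a * b * (1 - c) * ‖x₁ - z₀‖ ^ 2 +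
        (1 - t) * a * b * (1 - c) * ‖y₁ - z₀‖ ^ 2 +
        (1 - s) * t * a * b * c * ‖x₀ - z₁‖ ^ 2 +
        s * t * a * b * c * ‖x₁ - z₁‖ ^ 2 +
        (1 - t) * a * b * c * ‖y₁ - z₁‖ ^ 2 +
        s * (1 - t) * t * (1 - a) * (1 - b) * ‖x₀ - y₀‖ ^ 2 +
        s * (1 - t) * t * a * (1 - b) * ‖x₁ - y₀‖ ^ 2 +
        (1 - t) * t * (s - a) * b * ‖x₀ - y₁‖ ^ 2 := by
  set xs := lineMap x₀ x₁ s
  have hw := norm_lineMap_sub_lineMap_sq y₁ xs z₀ z₁ t c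
  have hxz₀ := norm_lineMap_sub_sq x₀ x₁ z₀ s
  have hxz₁ := norm_lineMap_sub_sq x₀ x₁ z₁ s
  have hxy := norm_lineMap_sub_sq x₀ x₁ y₁ s
  have hab := norm_lineMap_sub_lineMap_sq x₀ x₁ y₀ y₁ a b
  have hfirst : 0 ≤ a * b * ‖lineMap y₁ xs t - lineMap z₀ z₁ c‖ ^ 2 := by positivity
  have hsecond : 0 ≤ s * t * (1 - t) * ‖lineMap x₀ x₁ a - lineMap y₀ y₁ b‖ ^ 2 :=
    mul_nonneg (mul_nonneg (mul_nonneg (ha0.trans has) ht0) (sub_nonneg.2 ht1)) (sq_nonneg _)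
  rw [norm_sub_rev y₁ xs] at hw
  rw [hw, hxz₀, hxz₁, hxy] at hfirst
  rw [hab] at hsecond
  linear_combination hfirst + hsecond

theorem six_point_ineq {H : Type*} [NormedAddCommGroup H] [InnerProductSpace ℝ H]
    (a b c s t : ℝ)
    (ha0 : 0 ≤ a) (hb0 : 0 ≤ b) (hb1 : b ≤ 1) (hc0 : 0 ≤ c) (hc1 : c ≤ 1)
    (has : a ≤ s) (hs1 : s ≤ 1) (ht0 : 0 ≤ t) (ht1 : t ≤ 1)
    (x₀ x₁ y₀ y₁ z₀ z₁ : H) :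
    s * t * a * ((1 - t) * (1 - a) + (1 - s) * t * b) * ‖x₀ - x₁‖ ^ 2 +
        s * (1 - t) * t * (1 - b) * b * ‖y₀ - y₁‖ ^ 2 +
        a * b * (1 - c) * c * ‖z₀ - z₁‖ ^ 2 ≤
      (1 - s) * t * a * b * (1 - c) * ‖x₀ - z₀‖ ^ 2 +
        s * t * a * b * (1 - c) * ‖x₁ - z₀‖ ^ 2 +
        (1 - t) * a * b * (1 - c) * ‖y₁ - z₀‖ ^ 2 +
        (1 - s) * t * a * b * c * ‖x₀ - z₁‖ ^ 2 +
        s * t * a * b * c * ‖x₁ - z₁‖ ^ 2 +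
        (1 - t) * a * b * c * ‖y₁ - z₁‖ ^ 2 +
        s * (1 - t) * t * (1 - a) * (1 - b) * ‖x₀ - y₀‖ ^ 2 +
        s * (1 - t) * t * a * (1 - b) * ‖x₁ - y₀‖ ^ 2 +
        (1 - t) * t * (s - a) * b * ‖x₀ - y₁‖ ^ 2 :=
  six_point_ineq_general a b c s t ha0 hb0 has ht0 ht1 x₀ x₁ y₀ y₁ z₀ z₁
end

section
/- Let H be a real inner product space and let a, b, c, s, t ∈ [0,1] with a ≤ s. Suppose x₀, x₁, y₀, y₁, z₀, z₁ ∈ H satisfy (1−t)y₁ + t((1−s)x₀ + s x₁) = (1−c)z₀ + c z₁ and (1−a)x₀ + a x₁ = (1−b)y₀ + b y₁. Then the six-point inequality holds with equality: s·t·a·((1−t)(1−a)+(1−s)t·b)·‖x₀−x₁‖² + s(1−t)t(1−b)b·‖y₀−y₁‖² + a·b(1−c)c·‖z₀−z₁‖² = (1−s)t·a·b(1−c)·‖x₀−z₀‖² + s·t·a·b(1−c)·‖x₁−z₀‖² + (1−t)a·b(1−c)·‖y₁−z₀‖² + (1−s)t·a·b·c·‖x₀−z₁‖² + s·t·a·b·c·‖x₁−z₁‖²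 + (1−t)a·b·c·‖y₁−z₁‖² + s(1−t)t(1−a)(1−b)·‖x₀−y₀‖² + s(1−t)t·a(1−b)·‖x₁−y₀‖² + (1−t)t(s−a)b·‖x₀−y₁‖². -/
theorem six_point_eq {H : Type*} [NormedAddCommGroup H] [InnerProductSpace ℝ H]
    (a b c s t : ℝ)
    (ha0 : 0 ≤ a) (hb0 : 0 ≤ b) (hb1 : b ≤ 1) (hc0 : 0 ≤ c) (hc1 : c ≤ 1)
    (has : a ≤ s) (hs1 : s ≤ 1) (ht0 : 0 ≤ t) (ht1 : t ≤ 1)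
    (x₀ x₁ y₀ y₁ z₀ z₁ : H)
    (h1 : (1 - t) • y₁ + t • ((1 - s) • x₀ + s • x₁) = (1 - c) • z₀ + c • z₁)
    (h2 : (1 - a) • x₀ + a • x₁ = (1 - b) • y₀ + b • y₁) :
    s * t * a * ((1 - t) * (1 - a) + (1 - s) * t * b) * ‖x₀ - x₁‖ ^ 2 +
        s * (1 - t) * t * (1 - b) * b * ‖y₀ - y₁‖ ^ 2 +
        a * b * (1 - c) * c * ‖z₀ - z₁‖ ^ 2 =
      (1 - s) * t * a * b * (1 - c) * ‖x₀ - z₀‖ ^ 2 +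
        s * t * a * b * (1 - c) * ‖x₁ - z₀‖ ^ 2 +
        (1 - t) * a * b * (1 - c) * ‖y₁ - z₀‖ ^ 2 +
        (1 - s) * t * a * b * c * ‖x₀ - z₁‖ ^ 2 +
        s * t * a * b * c * ‖x₁ - z₁‖ ^ 2 +
        (1 - t) * a * b * c * ‖y₁ - z₁‖ ^ 2 +
        s * (1 - t) * t * (1 - a) * (1 - b) * ‖x₀ - y₀‖ ^ 2 +
        s * (1 - t) * t * a * (1 - b) * ‖x₁ - y₀‖ ^ 2 +
        (1 - t) * t * (s - a) * b * ‖x₀ - y₁‖ ^ 2 := by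
  have e1 : (inner ℝ ((1 - t) • y₁ + t • ((1 - s) • x₀ + s • x₁) - ((1 - c) • z₀ + c • z₁))
      ((1 - t) • y₁ + t • ((1 - s) • x₀ + s • x₁) - ((1 - c) • z₀ + c • z₁)) : ℝ) = 0 := by
    rw [sub_eq_zero.mpr h1]; simp
  have e2 : (inner ℝ ((1 - a) • x₀ + a • x₁ - ((1 - b) • y₀ + b • y₁))
      ((1 - a) • x₀ + a • x₁ - ((1 - b) • y₀ + b • y₁)) : ℝ) = 0 := by
    rw [sub_eq_zero.mpr h2]; simp
  simp only [← @real_inner_self_eq_norm_sq]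
  simp only [inner_sub_left, inner_sub_right, inner_add_left, inner_add_right,
    real_inner_smul_left, real_inner_smul_right, real_inner_comm] at e1 e2 ⊢
  linear_combination (-(a * b)) * e1 + (-(s * t * (1 - t))) * e2
end

section
/- Let H be a real inner product space, let b ∈ (0,1], a ∈ [0,1], and let x₀, x₁, y₀, y₁ ∈ H. Let x' = (1−a)x₀ + a·x₁. Then ‖y₁ − x'‖² ≥ (1−b)·‖y₀−y₁‖² − ((1−a)(1−b)/b)·‖y₀−x₀‖² − (a(1−b)/b)·‖y₀−x₁‖² + ((1−a)a(1−b)/b)·‖x₀−x₁‖². -/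
/-!
In a Hilbert space the CAT(0) comparison for the point `x'` on the segment `[x₀, x₁]` is the
exact identity `‖y - x'‖² = (1-a)‖y - x₀‖² + a‖y - x₁‖² - (1-a)a‖x₀ - x₁‖²`. The same identity,
applied to the segment `[y₀, y₁]` and read as `0 ≤ ‖x' - ((1-b)y₀ + by₁)‖²`, gives the quadratic
triangle inequality `(1-b)b‖y₀ - y₁‖² ≤ (1-b)‖y₀ - x'‖² + b‖y₁ - x'‖²`; dividing by `b` and
substituting the identity for `‖y₀ - x'‖²` yields the claim.
-/

open RealInnerProductSpace

section

variable {F : Type*} [NormedAddCommGroup F] [InnerProductSpace ℝ F]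

theorem norm_one_sub_smul_add_smul_sq (t : ℝ) (u v : F) :
    ‖(1 - t) • u + t • v‖ ^ 2 = (1 - t) * ‖u‖ ^ 2 + t * ‖v‖ ^ 2 - (1 - t) * t * ‖u - v‖ ^ 2 := by
  rw [norm_add_sq_real, norm_sub_sq_real, norm_smul, norm_smul, real_inner_smul_left,
    real_inner_smul_right, mul_pow, mul_pow, Real.norm_eq_abs, Real.norm_eq_abs, sq_abs, sq_abs]
  ring

theorem norm_sub_one_sub_smul_add_smul_sq (t : ℝ) (y x₀ x₁ : F) :
    ‖y - ((1 - t) • x₀ + t • x₁)‖ ^ 2 =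
      (1 - t) * ‖y - x₀‖ ^ 2 + t * ‖y - x₁‖ ^ 2 - (1 - t) * t * ‖x₀ - x₁‖ ^ 2 := by
  have hy : y - ((1 - t) • x₀ + t • x₁) = (1 - t) • (y - x₀) + t • (y - x₁) := by module
  rw [hy, norm_one_sub_smul_add_smul_sq, sub_sub_sub_cancel_left, norm_sub_rev x₁]

theorem one_sub_mul_mul_norm_sub_sq_le (t : ℝ) (y₀ y₁ x : F) :
    (1 - t) * t * ‖y₀ - y₁‖ ^ 2 ≤ (1 - t) * ‖y₀ - x‖ ^ 2 + t * ‖y₁ - x‖ ^ 2 := by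
  have h := norm_sub_one_sub_smul_add_smul_sq t x y₀ y₁
  rw [norm_sub_rev x y₀, norm_sub_rev x y₁] at h
  linarith [sq_nonneg ‖x - ((1 - t) • y₀ + t • y₁)‖]

end

theorem ineq_3_8_general {H : Type*} [NormedAddCommGroup H] [InnerProductSpace ℝ H]
    (a b : ℝ) (hb0 : 0 < b)
    (x₀ x₁ y₀ y₁ : H) :
    ‖y₁ - ((1 - a) • x₀ + a • x₁)‖ ^ 2 ≥
      (1 - b) * ‖y₀ - y₁‖ ^ 2 - ((1 - a) * (1 - b) / b) * ‖y₀ - x₀‖ ^ 2 -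
        (a * (1 - b) / b) * ‖y₀ - x₁‖ ^ 2 +
        ((1 - a) * a * (1 - b) / b) * ‖x₀ - x₁‖ ^ 2 := by
  set x' : H := (1 - a) • x₀ + a • x₁
  have hcat := norm_sub_one_sub_smul_add_smul_sq a y₀ x₀ x₁
  have htri := one_sub_mul_mul_norm_sub_sq_le b y₀ y₁ x'
  have hgap : ‖y₁ - x'‖ ^ 2 - ((1 - b) * ‖y₀ - y₁‖ ^ 2 - (1 - b) / b * ‖y₀ - x'‖ ^ 2) =
      ((1 - b) * ‖y₀ - x'‖ ^ 2 + b * ‖y₁ - x'‖ ^ 2 - (1 - b) * b * ‖y₀ - y₁‖ ^ 2) / b := by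
    field_simp
    ring
  have hmain : (1 - b) * ‖y₀ - y₁‖ ^ 2 - (1 - b) / b * ‖y₀ - x'‖ ^ 2 ≤ ‖y₁ - x'‖ ^ 2 := by
    rw [← sub_nonneg, hgap]
    exact div_nonneg (by linarith) hb0.le
  rw [ge_iff_le]
  calc _ = (1 - b) * ‖y₀ - y₁‖ ^ 2 - (1 - b) / b * ‖y₀ - x'‖ ^ 2 := by rw [hcat]; ring
    _ ≤ _ := hmain

theorem ineq_3_8 {H : Type*} [NormedAddCommGroup H] [InnerProductSpace ℝ H]
    (a b : ℝ) (hb0 : 0 < b) (hb1 : b ≤ 1) (ha0 : 0 ≤ a) (ha1 : a ≤ 1)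
    (x₀ x₁ y₀ y₁ : H) :
    ‖y₁ - ((1 - a) • x₀ + a • x₁)‖ ^ 2 ≥
      (1 - b) * ‖y₀ - y₁‖ ^ 2 - ((1 - a) * (1 - b) / b) * ‖y₀ - x₀‖ ^ 2 -
        (a * (1 - b) / b) * ‖y₀ - x₁‖ ^ 2 +
        ((1 - a) * a * (1 - b) / b) * ‖x₀ - x₁‖ ^ 2 :=
  ineq_3_8_general a b hb0 x₀ x₁ y₀ y₁
end

section
/- Let H be a real inner product space, let a, b ∈ (0,1), s ∈ (0,1] with a ≤ s, and let x₀, x₁, y₀, y₁ ∈ H. Let x = (1−s)x₀ + s·x₁. Then ‖y₁−x‖² ≥ (s((1−a)(1−b)+(s−a)b)/b)·‖x₀−x₁‖² + (s(1−b)/a)·‖y₀−y₁‖² − (s(1−a)(1−b)/(ab))·‖y₀−x₀‖² − (s(1−b)/b)·‖y₀−x₁‖² − ((s−a)/a)·‖y₁−x₀‖². -/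
open RealInnerProductSpace in
lemma combo_sq {H : Type*} [NormedAddCommGroup H] [InnerProductSpace ℝ H]
    (a b : ℝ) (x₀ x₁ y₀ y₁ : H) :
    ‖((1 - b) • y₀ + b • y₁) - ((1 - a) • x₀ + a • x₁)‖ ^ 2 =
      (1 - a) * (1 - b) * ‖y₀ - x₀‖ ^ 2 + (1 - a) * b * ‖y₁ - x₀‖ ^ 2 +
      a * (1 - b) * ‖y₀ - x₁‖ ^ 2 + a * b * ‖y₁ - x₁‖ ^ 2 -
      a * (1 - a) * ‖x₀ - x₁‖ ^ 2 - b * (1 - b) * ‖y₀ - y₁‖ ^ 2 := by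
  have e : ∀ v : H, ‖v‖ ^ 2 = ⟪v, v⟫ := fun v => (real_inner_self_eq_norm_sq v).symm
  simp only [e, inner_sub_left, inner_sub_right, inner_add_left, inner_add_right,
    real_inner_smul_left, real_inner_smul_right]
  rw [real_inner_comm x₀ x₁, real_inner_comm y₀ y₁, real_inner_comm y₀ x₀,
    real_inner_comm y₁ x₀, real_inner_comm y₀ x₁, real_inner_comm y₁ x₁]
  ring

theorem ineq_3_10 {H : Type*} [NormedAddCommGroup H] [InnerProductSpace ℝ H]
    (a b s : ℝ) (ha0 : 0 < a) (ha1 : a < 1) (hb0 : 0 < b) (hb1 : b < 1)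
    (hs0 : 0 < s) (hs1 : s ≤ 1) (has : a ≤ s)
    (x₀ x₁ y₀ y₁ : H) :
    ‖y₁ - ((1 - s) • x₀ + s • x₁)‖ ^ 2 ≥
      (s * ((1 - a) * (1 - b) + (s - a) * b) / b) * ‖x₀ - x₁‖ ^ 2 +
        (s * (1 - b) / a) * ‖y₀ - y₁‖ ^ 2 -
        (s * (1 - a) * (1 - b) / (a * b)) * ‖y₀ - x₀‖ ^ 2 -
        (s * (1 - b) / b) * ‖y₀ - x₁‖ ^ 2 -
        ((s - a) / a) * ‖y₁ - x₀‖ ^ 2 := by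
  -- identity for y₁ - ((1-s)x₀ + s x₁) via combo_sq with b = 1
  have h1 := combo_sq s 1 x₀ x₁ y₀ y₁
  simp only [sub_self, zero_smul, one_smul, zero_add] at h1
  -- the key nonnegative square
  have h2 := combo_sq a b x₀ x₁ y₀ y₁
  have hW : (0:ℝ) ≤ ‖((1 - b) • y₀ + b • y₁) - ((1 - a) • x₀ + a • x₁)‖ ^ 2 := sq_nonneg _
  have hsW : (0:ℝ) ≤ s * ‖((1 - b) • y₀ + b • y₁) - ((1 - a) • x₀ + a • x₁)‖ ^ 2 :=
    mul_nonneg hs0.le hW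
  -- cleared-denominator inequality
  have P : a * b * ‖y₁ - ((1 - s) • x₀ + s • x₁)‖ ^ 2 -
      (s * ((1 - a) * (1 - b) + (s - a) * b) * a * ‖x₀ - x₁‖ ^ 2 +
        s * (1 - b) * b * ‖y₀ - y₁‖ ^ 2 -
        s * (1 - a) * (1 - b) * ‖y₀ - x₀‖ ^ 2 -
        s * (1 - b) * a * ‖y₀ - x₁‖ ^ 2 -
        (s - a) * b * ‖y₁ - x₀‖ ^ 2) =
      s * ‖((1 - b) • y₀ + b • y₁) - ((1 - a) • x₀ + a • x₁)‖ ^ 2 := by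
    linear_combination (a * b) * h1 - s * h2
  rw [ge_iff_le, ← sub_nonneg]
  have hab : (0:ℝ) < a * b := mul_pos ha0 hb0
  have h3 : ‖y₁ - ((1 - s) • x₀ + s • x₁)‖ ^ 2 -
      ((s * ((1 - a) * (1 - b) + (s - a) * b) / b) * ‖x₀ - x₁‖ ^ 2 +
        (s * (1 - b) / a) * ‖y₀ - y₁‖ ^ 2 -
        (s * (1 - a) * (1 - b) / (a * b)) * ‖y₀ - x₀‖ ^ 2 -
        (s * (1 - b) / b) * ‖y₀ - x₁‖ ^ 2 -
        ((s - a) / a) * ‖y₁ - x₀‖ ^ 2) =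
      (a * b)⁻¹ * (a * b * ‖y₁ - ((1 - s) • x₀ + s • x₁)‖ ^ 2 -
      (s * ((1 - a) * (1 - b) + (s - a) * b) * a * ‖x₀ - x₁‖ ^ 2 +
        s * (1 - b) * b * ‖y₀ - y₁‖ ^ 2 -
        s * (1 - a) * (1 - b) * ‖y₀ - x₀‖ ^ 2 -
        s * (1 - b) * a * ‖y₀ - x₁‖ ^ 2 -
        (s - a) * b * ‖y₁ - x₀‖ ^ 2)) := by
    field_simp
  rw [h3, P]
  exact mul_nonneg (inv_nonneg.mpr hab.le) hsW
end

section
/- Let (X, d) be a metric space with the following property (O₃-comparison for a Hilbert space H): for any six points x₀, x₁, y₀, y₁, z₀, z₁ ∈ X there exist points x̃₀, x̃₁, ỹ₀, ỹ₁, z̃₀, z̃₁ ∈ H such that ‖x̃₀ − x̃₁‖ ≥ d(x₀,x₁), ‖ỹ₀ − ỹ₁‖ ≥ d(y₀,y₁), ‖z̃₀ − z̃₁‖ ≥ d(z₀,z₁), and ‖q̃ᵢ − r̃ⱼ‖ ≤ d(qᵢ, rⱼ) for all i, j ∈ {0,1} and all distinct pairs q, r ∈ {x, y, z}. Then for all a,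 b, c, s, t ∈ [0,1] with a ≤ s and all x₀, x₁, y₀, y₁, z₀, z₁ ∈ X: s·t·a·((1−t)(1−a)+(1−s)t·b)·d(x₀,x₁)² + s(1−t)t(1−b)b·d(y₀,y₁)² + a·b(1−c)c·d(z₀,z₁)² ≤ (1−s)t·a·b(1−c)·d(x₀,z₀)² + s·t·a·b(1−c)·d(x₁,z₀)² + (1−t)a·b(1−c)·d(y₁,z₀)² + (1−s)t·a·b·c·d(x₀,z₁)² + s·t·a·b·c·d(x₁,z₁)² + (1−t)a·b·c·d(y₁,z₁)² + s(1−t)t(1−a)(1−b)·d(x₀,y₀)² + s(1−t)t·a(1−b)·d(x₁,y₀)² + (1−t)t(s−a)b·d(x₀,y₁)². -/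
/-!
In an inner product space the six-point inequality is a sum of two squares,
`RHS - LHS = a b ‖w - u‖² + s t (1 - t) ‖v - p‖²` with the barycentres
`u = (1 - s) t x₀ + s t x₁ + (1 - t) y₁`, `w = (1 - c) z₀ + c z₁`, `p = (1 - a) x₀ + a x₁` and
`v = (1 - b) y₀ + b y₁`; this follows from the identity
`∑ λᵢ ‖qᵢ - z‖² = ‖∑ λᵢ qᵢ - z‖² + ∑_{i<j} λᵢ λⱼ ‖qᵢ - qⱼ‖²` for weights summing to `1`.
The left side only involves the non-adjacent pairs of `O₃` and the right side only adjacent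
ones, all with nonnegative coefficients, so the inequality passes from the comparison points
in `H` back to `X`.
-/

section SixPoint

variable {α : Type*} [Dist α]

def sixPointLHS (a b c s t : ℝ) (x₀ x₁ y₀ y₁ z₀ z₁ : α) : ℝ :=
  s * t * a * ((1 - t) * (1 - a) + (1 - s) * t * b) * dist x₀ x₁ ^ 2 +
    s * (1 - t) * t * (1 - b) * b * dist y₀ y₁ ^ 2 +
    a * b * (1 - c) * c * dist z₀ z₁ ^ 2

def sixPointRHS (a b c s t : ℝ) (x₀ x₁ y₀ y₁ z₀ z₁ : α) : ℝ :=
  (1 - s) * t * a * b * (1 - c) * dist x₀ z₀ ^ 2 +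
    s * t * a * b * (1 - c) * dist x₁ z₀ ^ 2 +
    (1 - t) * a * b * (1 - c) * dist y₁ z₀ ^ 2 +
    (1 - s) * t * a * b * c * dist x₀ z₁ ^ 2 +
    s * t * a * b * c * dist x₁ z₁ ^ 2 +
    (1 - t) * a * b * c * dist y₁ z₁ ^ 2 +
    s * (1 - t) * t * (1 - a) * (1 - b) * dist x₀ y₀ ^ 2 +
    s * (1 - t) * t * a * (1 - b) * dist x₁ y₀ ^ 2 +
    (1 - t) * t * (s - a) * b * dist x₀ y₁ ^ 2

end SixPoint

section Hilbert

variable {H : Type*} [NormedAddCommGroup H] [InnerProductSpace ℝ H]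

theorem weighted_norm_sub_sq_three (l m n : ℝ) (p q r z : H) (h : l + m + n = 1) :
    l * ‖p - z‖ ^ 2 + m * ‖q - z‖ ^ 2 + n * ‖r - z‖ ^ 2 =
      ‖l • p + m • q + n • r - z‖ ^ 2 + l * m * ‖p - q‖ ^ 2 + l * n * ‖p - r‖ ^ 2
        + m * n * ‖q - r‖ ^ 2 := by
  obtain rfl : n = 1 - l - m := by linarith
  simp only [← real_inner_self_eq_norm_sq, inner_add_left, inner_add_right, inner_sub_left,
    inner_sub_right, real_inner_smul_left, real_inner_smul_right]
  simp only [real_inner_comm p q, real_inner_comm p r, real_inner_comm p z, real_inner_comm q r,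
    real_inner_comm q z, real_inner_comm r z]
  ring

theorem weighted_norm_sub_sq_two (l m : ℝ) (p q z : H) (h : l + m = 1) :
    l * ‖p - z‖ ^ 2 + m * ‖q - z‖ ^ 2 = ‖l • p + m • q - z‖ ^ 2 + l * m * ‖p - q‖ ^ 2 := by
  simpa using weighted_norm_sub_sq_three l m 0 p q q z (by linarith)

theorem sixPointRHS_sub_sixPointLHS (a b c s t : ℝ) (x₀ x₁ y₀ y₁ z₀ z₁ : H) :
    sixPointRHS a b c s t x₀ x₁ y₀ y₁ z₀ z₁ - sixPointLHS a b c s t x₀ x₁ y₀ y₁ z₀ z₁ =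
      a * b * ‖(1 - c) • z₀ + c • z₁ - (((1 - s) * t) • x₀ + (s * t) • x₁ + (1 - t) • y₁)‖ ^ 2
        + s * t * (1 - t) * ‖(1 - b) • y₀ + b • y₁ - ((1 - a) • x₀ + a • x₁)‖ ^ 2 := by
  set u := ((1 - s) * t) • x₀ + (s * t) • x₁ + (1 - t) • y₁
  set p := (1 - a) • x₀ + a • x₁
  have hx₀ := weighted_norm_sub_sq_three ((1 - s) * t) (s * t) (1 - t) x₀ x₁ y₁ z₀ (by ring)
  have hx₁ := weighted_norm_sub_sq_three ((1 - s) * t) (s * t) (1 - t) x₀ x₁ y₁ z₁ (by ring)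
  have hz := weighted_norm_sub_sq_two (1 - c) c z₀ z₁ u (by ring)
  have hy₀ := weighted_norm_sub_sq_two (1 - a) a x₀ x₁ y₀ (by ring)
  have hy₁ := weighted_norm_sub_sq_two (1 - a) a x₀ x₁ y₁ (by ring)
  have hy := weighted_norm_sub_sq_two (1 - b) b y₀ y₁ p (by ring)
  simp only [sixPointLHS, sixPointRHS, dist_eq_norm]
  rw [norm_sub_rev z₀ u, norm_sub_rev z₁ u] at hz
  rw [norm_sub_rev y₀ p, norm_sub_rev y₁ p] at hy
  linear_combination (a * b * (1 - c)) * hx₀ + (a * b * c) * hx₁ + (a * b) * hz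
    + (s * (1 - t) * t * (1 - b)) * hy₀ + (s * (1 - t) * t * b) * hy₁ + (s * (1 - t) * t) * hy

theorem sixPointLHS_le_sixPointRHS {a b c s t : ℝ} (hab : 0 ≤ a * b) (hst : 0 ≤ s * t * (1 - t))
    (x₀ x₁ y₀ y₁ z₀ z₁ : H) :
    sixPointLHS a b c s t x₀ x₁ y₀ y₁ z₀ z₁ ≤ sixPointRHS a b c s t x₀ x₁ y₀ y₁ z₀ z₁ := by
  rw [← sub_nonneg, sixPointRHS_sub_sixPointLHS]
  exact add_nonneg (mul_nonneg hab (sq_nonneg _)) (mul_nonneg hst (sq_nonneg _))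

end Hilbert

section Monotone

variable {α β : Type*} [PseudoMetricSpace α] [PseudoMetricSpace β] {a b c s t : ℝ}

theorem sixPointLHS_le_of_dist_le (ha0 : 0 ≤ a) (hb0 : 0 ≤ b) (hb1 : b ≤ 1) (hc0 : 0 ≤ c)
    (hc1 : c ≤ 1) (has : a ≤ s) (hs1 : s ≤ 1) (ht0 : 0 ≤ t) (ht1 : t ≤ 1)
    {x₀ x₁ y₀ y₁ z₀ z₁ : α} {x'₀ x'₁ y'₀ y'₁ z'₀ z'₁ : β}
    (hx : dist x₀ x₁ ≤ dist x'₀ x'₁) (hy : dist y₀ y₁ ≤ dist y'₀ y'₁)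
    (hz : dist z₀ z₁ ≤ dist z'₀ z'₁) :
    sixPointLHS a b c s t x₀ x₁ y₀ y₁ z₀ z₁ ≤ sixPointLHS a b c s t x'₀ x'₁ y'₀ y'₁ z'₀ z'₁ := by
  unfold sixPointLHS
  gcongr <;> bound

theorem sixPointRHS_le_of_dist_le (ha0 : 0 ≤ a) (hb0 : 0 ≤ b) (hb1 : b ≤ 1) (hc0 : 0 ≤ c)
    (hc1 : c ≤ 1) (has : a ≤ s) (hs1 : s ≤ 1) (ht0 : 0 ≤ t) (ht1 : t ≤ 1)
    {x₀ x₁ y₀ y₁ z₀ z₁ : α} {x'₀ x'₁ y'₀ y'₁ z'₀ z'₁ : β}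
    (hxz₀₀ : dist x₀ z₀ ≤ dist x'₀ z'₀) (hxz₁₀ : dist x₁ z₀ ≤ dist x'₁ z'₀)
    (hyz₁₀ : dist y₁ z₀ ≤ dist y'₁ z'₀) (hxz₀₁ : dist x₀ z₁ ≤ dist x'₀ z'₁)
    (hxz₁₁ : dist x₁ z₁ ≤ dist x'₁ z'₁) (hyz₁₁ : dist y₁ z₁ ≤ dist y'₁ z'₁)
    (hxy₀₀ : dist x₀ y₀ ≤ dist x'₀ y'₀) (hxy₁₀ : dist x₁ y₀ ≤ dist x'₁ y'₀)
    (hxy₀₁ : dist x₀ y₁ ≤ dist x'₀ y'₁) :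
    sixPointRHS a b c s t x₀ x₁ y₀ y₁ z₀ z₁ ≤ sixPointRHS a b c s t x'₀ x'₁ y'₀ y'₁ z'₀ z'₁ := by
  unfold sixPointRHS
  gcongr <;> bound

end Monotone

theorem O3_comparison_implies_six_point_ineq_general
    {X : Type*} [MetricSpace X]
    {H : Type*} [NormedAddCommGroup H] [InnerProductSpace ℝ H]
    (hO3 : ∀ x₀ x₁ y₀ y₁ z₀ z₁ : X,
      ∃ x'₀ x'₁ y'₀ y'₁ z'₀ z'₁ : H,
        ‖x'₀ - x'₁‖ ≥ dist x₀ x₁ ∧ ‖y'₀ - y'₁‖ ≥ dist y₀ y₁ ∧ ‖z'₀ - z'₁‖ ≥ dist z₀ z₁ ∧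
        ‖x'₀ - y'₀‖ ≤ dist x₀ y₀ ∧ ‖x'₀ - y'₁‖ ≤ dist x₀ y₁ ∧
        ‖x'₁ - y'₀‖ ≤ dist x₁ y₀ ∧ ‖x'₁ - y'₁‖ ≤ dist x₁ y₁ ∧
        ‖x'₀ - z'₀‖ ≤ dist x₀ z₀ ∧ ‖x'₀ - z'₁‖ ≤ dist x₀ z₁ ∧
        ‖x'₁ - z'₀‖ ≤ dist x₁ z₀ ∧ ‖x'₁ - z'₁‖ ≤ dist x₁ z₁ ∧
        ‖y'₀ - z'₀‖ ≤ dist y₀ z₀ ∧ ‖y'₀ - z'₁‖ ≤ dist y₀ z₁ ∧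
        ‖y'₁ - z'₀‖ ≤ dist y₁ z₀ ∧ ‖y'₁ - z'₁‖ ≤ dist y₁ z₁)
    (a b c s t : ℝ)
    (ha0 : 0 ≤ a) (hb0 : 0 ≤ b) (hb1 : b ≤ 1) (hc0 : 0 ≤ c) (hc1 : c ≤ 1)
    (has : a ≤ s) (hs1 : s ≤ 1) (ht0 : 0 ≤ t) (ht1 : t ≤ 1)
    (x₀ x₁ y₀ y₁ z₀ z₁ : X) :
    s * t * a * ((1 - t) * (1 - a) + (1 - s) * t * b) * dist x₀ x₁ ^ 2 +
        s * (1 - t) * t * (1 - b) * b * dist y₀ y₁ ^ 2 +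
        a * b * (1 - c) * c * dist z₀ z₁ ^ 2 ≤
      (1 - s) * t * a * b * (1 - c) * dist x₀ z₀ ^ 2 +
        s * t * a * b * (1 - c) * dist x₁ z₀ ^ 2 +
        (1 - t) * a * b * (1 - c) * dist y₁ z₀ ^ 2 +
        (1 - s) * t * a * b * c * dist x₀ z₁ ^ 2 +
        s * t * a * b * c * dist x₁ z₁ ^ 2 +
        (1 - t) * a * b * c * dist y₁ z₁ ^ 2 +
        s * (1 - t) * t * (1 - a) * (1 - b) * dist x₀ y₀ ^ 2 +
        s * (1 - t) * t * a * (1 - b) * dist x₁ y₀ ^ 2 +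
        (1 - t) * t * (s - a) * b * dist x₀ y₁ ^ 2 := by
  simp only [← dist_eq_norm] at hO3
  obtain ⟨x'₀, x'₁, y'₀, y'₁, z'₀, z'₁, hx, hy, hz, hxy₀₀, hxy₀₁, hxy₁₀, -, hxz₀₀, hxz₀₁, hxz₁₀,
    hxz₁₁, -, -, hyz₁₀, hyz₁₁⟩ := hO3 x₀ x₁ y₀ y₁ z₀ z₁
  calc sixPointLHS a b c s t x₀ x₁ y₀ y₁ z₀ z₁
      ≤ sixPointLHS a b c s t x'₀ x'₁ y'₀ y'₁ z'₀ z'₁ :=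
        sixPointLHS_le_of_dist_le ha0 hb0 hb1 hc0 hc1 has hs1 ht0 ht1 hx hy hz
    _ ≤ sixPointRHS a b c s t x'₀ x'₁ y'₀ y'₁ z'₀ z'₁ :=
        sixPointLHS_le_sixPointRHS (mul_nonneg ha0 hb0)
          (mul_nonneg (mul_nonneg (ha0.trans has) ht0) (sub_nonneg.2 ht1)) _ _ _ _ _ _
    _ ≤ sixPointRHS a b c s t x₀ x₁ y₀ y₁ z₀ z₁ :=
        sixPointRHS_le_of_dist_le ha0 hb0 hb1 hc0 hc1 has hs1 ht0 ht1 hxz₀₀ hxz₁₀ hyz₁₀ hxz₀₁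
          hxz₁₁ hyz₁₁ hxy₀₀ hxy₁₀ hxy₀₁

theorem O3_comparison_implies_six_point_ineq
    {X : Type*} [MetricSpace X]
    {H : Type*} [NormedAddCommGroup H] [InnerProductSpace ℝ H] [CompleteSpace H]
    (hO3 : ∀ x₀ x₁ y₀ y₁ z₀ z₁ : X,
      ∃ x'₀ x'₁ y'₀ y'₁ z'₀ z'₁ : H,
        ‖x'₀ - x'₁‖ ≥ dist x₀ x₁ ∧ ‖y'₀ - y'₁‖ ≥ dist y₀ y₁ ∧ ‖z'₀ - z'₁‖ ≥ dist z₀ z₁ ∧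
        ‖x'₀ - y'₀‖ ≤ dist x₀ y₀ ∧ ‖x'₀ - y'₁‖ ≤ dist x₀ y₁ ∧
        ‖x'₁ - y'₀‖ ≤ dist x₁ y₀ ∧ ‖x'₁ - y'₁‖ ≤ dist x₁ y₁ ∧
        ‖x'₀ - z'₀‖ ≤ dist x₀ z₀ ∧ ‖x'₀ - z'₁‖ ≤ dist x₀ z₁ ∧
        ‖x'₁ - z'₀‖ ≤ dist x₁ z₀ ∧ ‖x'₁ - z'₁‖ ≤ dist x₁ z₁ ∧
        ‖y'₀ - z'₀‖ ≤ dist y₀ z₀ ∧ ‖y'₀ - z'₁‖ ≤ dist y₀ z₁ ∧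
        ‖y'₁ - z'₀‖ ≤ dist y₁ z₀ ∧ ‖y'₁ - z'₁‖ ≤ dist y₁ z₁)
    (a b c s t : ℝ)
    (ha0 : 0 ≤ a) (hb0 : 0 ≤ b) (hb1 : b ≤ 1) (hc0 : 0 ≤ c) (hc1 : c ≤ 1)
    (has : a ≤ s) (hs1 : s ≤ 1) (ht0 : 0 ≤ t) (ht1 : t ≤ 1)
    (x₀ x₁ y₀ y₁ z₀ z₁ : X) :
    s * t * a * ((1 - t) * (1 - a) + (1 - s) * t * b) * dist x₀ x₁ ^ 2 +
        s * (1 - t) * t * (1 - b) * b * dist y₀ y₁ ^ 2 +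
        a * b * (1 - c) * c * dist z₀ z₁ ^ 2 ≤
      (1 - s) * t * a * b * (1 - c) * dist x₀ z₀ ^ 2 +
        s * t * a * b * (1 - c) * dist x₁ z₀ ^ 2 +
        (1 - t) * a * b * (1 - c) * dist y₁ z₀ ^ 2 +
        (1 - s) * t * a * b * c * dist x₀ z₁ ^ 2 +
        s * t * a * b * c * dist x₁ z₁ ^ 2 +
        (1 - t) * a * b * c * dist y₁ z₁ ^ 2 +
        s * (1 - t) * t * (1 - a) * (1 - b) * dist x₀ y₀ ^ 2 +
        s * (1 - t) * t * a * (1 - b) * dist x₁ y₀ ^ 2 +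
        (1 - t) * t * (s - a) * b * dist x₀ y₁ ^ 2 :=
  O3_comparison_implies_six_point_ineq_general hO3 a b c s t ha0 hb0 hb1 hc0 hc1 has hs1 ht0 ht1 x₀
    x₁ y₀ y₁ z₀ z₁
end

section
/- Let H be a real inner product space, and let x₀, x₁, y₀, y₁, z₀, z₁ ∈ H and a, b, c, s, t ∈ (0,1) with a < s satisfy (1−t)y₁ + t((1−s)x₀ + s·x₁) = (1−c)z₀ + c·z₁ and (1−a)x₀ + a·x₁ = (1−b)y₀ + b·y₁. Define for ε ≥ 0 the function d_ε on pairs of the six points by d_ε(z₀,z₁) = ‖z₀−z₁‖ + ε and d_ε(p,q) = ‖p−q‖ for all other pairs. Then for every ε > 0, the six points with the function d_ε violate the six-point inequality; that is, s·t·a·((1−t)(1−a)+(1−s)t·b)·d_ε(x₀,x₁)² + s(1−t)t(1−b)b·d_ε(y₀,y₁)² + a·b(1−c)c·d_ε(z₀,z₁)² > (1−s)t·a·b(1−c)·d_ε(x₀,z₀)² + s·t·a·b(1−c)·d_ε(x₁,z₀)² + (1−t)a·b(1−c)·d_ε(y₁,z₀)² + (1−s)t·a·b·c·d_ε(x₀,z₁)²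 + s·t·a·b·c·d_ε(x₁,z₁)² + (1−t)a·b·c·d_ε(y₁,z₁)² + s(1−t)t(1−a)(1−b)·d_ε(x₀,y₀)² + s(1−t)t·a(1−b)·d_ε(x₁,y₀)² + (1−t)t(s−a)b·d_ε(x₀,y₁)². -/
theorem six_point_violation {H : Type*} [NormedAddCommGroup H] [InnerProductSpace ℝ H]
    (a b c s t : ℝ)
    (ha0 : 0 < a) (ha1 : a < 1) (hb0 : 0 < b) (hb1 : b < 1)
    (hc0 : 0 < c) (hc1 : c < 1) (hs0 : 0 < s) (hs1 : s < 1)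
    (ht0 : 0 < t) (ht1 : t < 1) (has : a < s)
    (x₀ x₁ y₀ y₁ z₀ z₁ : H)
    (h1 : (1 - t) • y₁ + t • ((1 - s) • x₀ + s • x₁) = (1 - c) • z₀ + c • z₁)
    (h2 : (1 - a) • x₀ + a • x₁ = (1 - b) • y₀ + b • y₁)
    (ε : ℝ) (hε : 0 < ε) :
    s * t * a * ((1 - t) * (1 - a) + (1 - s) * t * b) * ‖x₀ - x₁‖ ^ 2 +
        s * (1 - t) * t * (1 - b) * b * ‖y₀ - y₁‖ ^ 2 +
        a * b * (1 - c) * c * (‖z₀ - z₁‖ + ε) ^ 2 >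
      (1 - s) * t * a * b * (1 - c) * ‖x₀ - z₀‖ ^ 2 +
        s * t * a * b * (1 - c) * ‖x₁ - z₀‖ ^ 2 +
        (1 - t) * a * b * (1 - c) * ‖y₁ - z₀‖ ^ 2 +
        (1 - s) * t * a * b * c * ‖x₀ - z₁‖ ^ 2 +
        s * t * a * b * c * ‖x₁ - z₁‖ ^ 2 +
        (1 - t) * a * b * c * ‖y₁ - z₁‖ ^ 2 +
        s * (1 - t) * t * (1 - a) * (1 - b) * ‖x₀ - y₀‖ ^ 2 +
        s * (1 - t) * t * a * (1 - b) * ‖x₁ - y₀‖ ^ 2 +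
        (1 - t) * t * (s - a) * b * ‖x₀ - y₁‖ ^ 2 := by
  have hvx₀ := congrArg (fun u => (inner ℝ u x₀ : ℝ)) h1
  have hvx₁ := congrArg (fun u => (inner ℝ u x₁ : ℝ)) h1
  have hvy₁ := congrArg (fun u => (inner ℝ u y₁ : ℝ)) h1
  have hvz₀ := congrArg (fun u => (inner ℝ u z₀ : ℝ)) h1
  have hvz₁ := congrArg (fun u => (inner ℝ u z₁ : ℝ)) h1
  have hwx₀ := congrArg (fun u => (inner ℝ u x₀ : ℝ)) h2
  have hwx₁ := congrArg (fun u => (inner ℝ u x₁ : ℝ)) h2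
  have hwy₀ := congrArg (fun u => (inner ℝ u y₀ : ℝ)) h2
  have hwy₁ := congrArg (fun u => (inner ℝ u y₁ : ℝ)) h2
  simp only [inner_add_left, real_inner_smul_left] at hvx₀ hvx₁ hvy₁ hvz₀ hvz₁ hwx₀ hwx₁ hwy₀ hwy₁
  rw [real_inner_comm x₀ y₁, real_inner_comm x₀ x₁, real_inner_comm x₀ z₀,
    real_inner_comm x₀ z₁] at hvx₀
  rw [real_inner_comm x₁ y₁, real_inner_comm x₁ z₀, real_inner_comm x₁ z₁] at hvx₁
  rw [real_inner_comm y₁ z₀, real_inner_comm y₁ z₁] at hvy₁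
  rw [real_inner_comm z₀ z₁] at hvz₀
  rw [real_inner_comm x₀ x₁, real_inner_comm x₀ y₀, real_inner_comm x₀ y₁] at hwx₀
  rw [real_inner_comm x₁ y₀, real_inner_comm x₁ y₁] at hwx₁
  rw [real_inner_comm y₀ y₁] at hwy₀
  have key : s * t * a * ((1 - t) * (1 - a) + (1 - s) * t * b) * ‖x₀ - x₁‖ ^ 2 +
        s * (1 - t) * t * (1 - b) * b * ‖y₀ - y₁‖ ^ 2 +
        a * b * (1 - c) * c * ‖z₀ - z₁‖ ^ 2 =
      (1 - s) * t * a * b * (1 - c) * ‖x₀ - z₀‖ ^ 2 +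
        s * t * a * b * (1 - c) * ‖x₁ - z₀‖ ^ 2 +
        (1 - t) * a * b * (1 - c) * ‖y₁ - z₀‖ ^ 2 +
        (1 - s) * t * a * b * c * ‖x₀ - z₁‖ ^ 2 +
        s * t * a * b * c * ‖x₁ - z₁‖ ^ 2 +
        (1 - t) * a * b * c * ‖y₁ - z₁‖ ^ 2 +
        s * (1 - t) * t * (1 - a) * (1 - b) * ‖x₀ - y₀‖ ^ 2 +
        s * (1 - t) * t * a * (1 - b) * ‖x₁ - y₀‖ ^ 2 +
        (1 - t) * t * (s - a) * b * ‖x₀ - y₁‖ ^ 2 := by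
    simp only [norm_sub_sq_real]
    simp only [← real_inner_self_eq_norm_sq]
    linear_combination (a * b * s * t - a * b * t) * hvx₀ + (-(a * b * s * t)) * hvx₁ +
      (a * b * t - a * b) * hvy₁ + (a * b - a * b * c) * hvz₀ + (a * b * c) * hvz₁ +
      (-(a * s * t ^ 2) + a * s * t + s * t ^ 2 - s * t) * hwx₀ +
      (a * s * t ^ 2 - a * s * t) * hwx₁ +
      (b * s * t ^ 2 - b * s * t - s * t ^ 2 + s * t) * hwy₀ +
      (-(b * s * t ^ 2) + b * s * t) * hwy₁
  have hpos : 0 < a * b * (1 - c) * c :=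
    mul_pos (mul_pos (mul_pos ha0 hb0) (by linarith)) hc0
  have hq : ‖z₀ - z₁‖ ^ 2 < (‖z₀ - z₁‖ + ε) ^ 2 :=
    pow_lt_pow_left₀ (lt_add_of_pos_right _ hε) (norm_nonneg _) two_ne_zero
  have hlt := mul_lt_mul_of_pos_left hq hpos
  linarith [key, hlt]
end
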